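/- arXiv:1411.0226 — 3 statements merged into one kernel-verified Lean document; each statement's English description precedes it below -/
import Mathlib

section
/- The curvature tensor of the Levi-Civita connection of the free step-two Carnot group satisfies R(X_h, X_k) X_l = (3/4)(δ_{hl} X_k − δ_{kl} X_h) and R(X_h, X_k) Ω_{i,j} = (1/4)(δ_{ih} Ω_{k,j} + δ_{jh} Ω_{i,k} − δ_{ik} Ω_{h,j} − δ_{jk} Ω_{i,h}). -/
/-- Curvature of the free step-two Carnot group on the frame `(X_h, Ω_{h,k})`:
`R(X_h, X_k) X_l = (3/4)(δ_{hl} X_k − δ_{kl} X_h)` and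
`R(X_h, X_k) Ω_{i,j} = (1/4)(δ_{ih} Ω_{k,j} + δ_{jh} Ω_{i,k} − δ_{ik} Ω_{h,j} − δ_{jk} Ω_{i,h})`,
where `R(x,y)z = ∇_x ∇_y z − ∇_y ∇_x z − ∇_{[x,y]} z`. -/
theorem carnot_curvature_XX (m : ℕ) (hm : 2 ≤ m)
    (V : Type*) [AddCommGroup V] [Module ℝ V]
    (X : Fin m → V) (Om : Fin m → Fin m → V)
    (hanti : ∀ h k, Om h k = -Om k h)
    (kron : Fin m → Fin m → ℝ)
    (hkron : ∀ a b, kron a b = if a = b then 1 else 0)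
    (br nabla : V →ₗ[ℝ] V →ₗ[ℝ] V)
    (hbrXX : ∀ h k, br (X h) (X k) = Om h k)
    (hbrXO : ∀ h i j, br (X h) (Om i j) = 0)
    (hbrOX : ∀ h i j, br (Om i j) (X h) = 0)
    (hbrOO : ∀ h k i j, br (Om h k) (Om i j) = 0)
    (hnXX : ∀ h k, nabla (X h) (X k) = (1 / 2 : ℝ) • Om h k)
    (hnXO : ∀ l h k, nabla (X l) (Om h k) =
      (1 / 2 : ℝ) • (kron k l • X h - kron h l • X k))
    (hnOX : ∀ l h k, nabla (Om h k) (X l) =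
      (1 / 2 : ℝ) • (kron k l • X h - kron h l • X k))
    (hnOO : ∀ h k s t, nabla (Om h k) (Om s t) = 0)
    (R : V → V → V → V)
    (hR : ∀ x y z, R x y z = nabla x (nabla y z) - nabla y (nabla x z) - nabla (br x y) z) :
    (∀ h k l, R (X h) (X k) (X l) =
      (3 / 4 : ℝ) • (kron h l • X k - kron k l • X h)) ∧
    (∀ h k i j, R (X h) (X k) (Om i j) =
      (1 / 4 : ℝ) • (kron i h • Om k j + kron j h • Om i k
        - kron i k • Om h j - kron j k • Om i h)) := by
  have hsym : ∀ a b, kron a b = kron b a := by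
    intro a b; simp [hkron, eq_comm]
  constructor
  · intro h k l
    rw [hR, hbrXX, hnXX, hnXX, map_smul, hnXO, map_smul, hnXO, hnOX,
      hsym l h, hsym l k, hsym k h]
    module
  · intro h k i j
    rw [hR, hbrXX, hnXO, hnXO, hnOO, map_smul, map_sub, map_smul, map_smul,
      hnXX, hnXX, map_smul, map_sub, map_smul, map_smul, hnXX, hnXX,
      hanti h i, hanti k i]
    module
end

section
/- The curvature tensor of the free step-two Carnot group satisfies R(X_l, Ω_{h,k}) X_t = (1/4)(δ_{th} Ω_{k,l} − δ_{tk} Ω_{h,l}) and R(X_l, Ω_{h,k}) Ω_{i,j} = (1/4)((δ_{jk}δ_{il} − δ_{jl}δ_{ki}) X_h + (δ_{jl}δ_{hi} − δ_{il}δ_{jh}) X_k). -/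
/-- Curvature of the free step-two Carnot group, mixed terms:
`R(X_l, Ω_{h,k}) X_t = (1/4)(δ_{th} Ω_{k,l} − δ_{tk} Ω_{h,l})` and
`R(X_l, Ω_{h,k}) Ω_{i,j} = (1/4)((δ_{jk}δ_{il} − δ_{jl}δ_{ki}) X_h + (δ_{jl}δ_{hi} − δ_{il}δ_{jh}) X_k)`,
where `R(x,y)z = ∇_x ∇_y z − ∇_y ∇_x z − ∇_{[x,y]} z`. -/
theorem carnot_curvature_XOm (m : ℕ) (hm : 2 ≤ m)
    (V : Type*) [AddCommGroup V] [Module ℝ V]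
    (X : Fin m → V) (Om : Fin m → Fin m → V)
    (hanti : ∀ h k, Om h k = -Om k h)
    (kron : Fin m → Fin m → ℝ)
    (hkron : ∀ a b, kron a b = if a = b then 1 else 0)
    (br nabla : V →ₗ[ℝ] V →ₗ[ℝ] V)
    (hbrXX : ∀ h k, br (X h) (X k) = Om h k)
    (hbrXO : ∀ h i j, br (X h) (Om i j) = 0)
    (hbrOX : ∀ h i j, br (Om i j) (X h) = 0)
    (hbrOO : ∀ h k i j, br (Om h k) (Om i j) = 0)
    (hnXX : ∀ h k, nabla (X h) (X k) = (1 / 2 : ℝ) • Om h k)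
    (hnXO : ∀ l h k, nabla (X l) (Om h k) =
      (1 / 2 : ℝ) • (kron k l • X h - kron h l • X k))
    (hnOX : ∀ l h k, nabla (Om h k) (X l) =
      (1 / 2 : ℝ) • (kron k l • X h - kron h l • X k))
    (hnOO : ∀ h k s t, nabla (Om h k) (Om s t) = 0)
    (R : V → V → V → V)
    (hR : ∀ x y z, R x y z = nabla x (nabla y z) - nabla y (nabla x z) - nabla (br x y) z) :
    (∀ l h k t, R (X l) (Om h k) (X t) =
      (1 / 4 : ℝ) • (kron t h • Om k l - kron t k • Om h l)) ∧
    (∀ l h k i j, R (X l) (Om h k) (Om i j) =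
      (1 / 4 : ℝ) • ((kron j k * kron i l - kron j l * kron k i) • X h
        + (kron j l * kron h i - kron i l * kron j h) • X k)) := by
  have ksym : ∀ a b, kron a b = kron b a := by
    intro a b; simp [hkron, eq_comm]
  constructor
  · intro l h k t
    rw [hR, hnXX, hnOX, map_smul, map_smul, hnOO, map_sub, map_smul, map_smul,
      hnXX, hnXX, hbrXO, map_zero, LinearMap.zero_apply,
      ksym t h, ksym t k, hanti k l, hanti h l]
    module
  · intro l h k i j
    rw [hR, hnOO, map_zero, hnXO, map_smul, map_sub, map_smul, map_smul,
      hnOX, hnOX, hbrXO, map_zero, LinearMap.zero_apply,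
      ksym j k, ksym j h]
    module
end

section
/- The curvature tensor of the free step-two Carnot group satisfies R(Ω_{i,j}, Ω_{h,k}) Ω_{s,t} = 0 and R(Ω_{i,j}, Ω_{h,k}) X_l = (1/4)((δ_{lk}δ_{jh} − δ_{hl}δ_{jk}) X_i + (δ_{hl}δ_{ik} − δ_{lk}δ_{ih}) X_j + (δ_{il}δ_{jk} − δ_{jl}δ_{ik}) X_h + (δ_{lj}δ_{ih} − δ_{hj}δ_{il}) X_k). -/
/-- Curvature of the free step-two Carnot group, vertical terms:
`R(Ω_{i,j}, Ω_{h,k}) Ω_{s,t} = 0` and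
`R(Ω_{i,j}, Ω_{h,k}) X_l = (1/4)((δ_{lk}δ_{jh} − δ_{hl}δ_{jk}) X_i + (δ_{hl}δ_{ik} − δ_{lk}δ_{ih}) X_j
  + (δ_{il}δ_{jk} − δ_{jl}δ_{ik}) X_h + (δ_{lj}δ_{ih} − δ_{hj}δ_{il}) X_k)`,
where `R(x,y)z = ∇_x ∇_y z − ∇_y ∇_x z − ∇_{[x,y]} z`. -/
theorem carnot_curvature_OmOm (m : ℕ) (hm : 2 ≤ m)
    (V : Type*) [AddCommGroup V] [Module ℝ V]
    (X : Fin m → V) (Om : Fin m → Fin m → V)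
    (hanti : ∀ h k, Om h k = -Om k h)
    (kron : Fin m → Fin m → ℝ)
    (hkron : ∀ a b, kron a b = if a = b then 1 else 0)
    (br nabla : V →ₗ[ℝ] V →ₗ[ℝ] V)
    (hbrXX : ∀ h k, br (X h) (X k) = Om h k)
    (hbrXO : ∀ h i j, br (X h) (Om i j) = 0)
    (hbrOX : ∀ h i j, br (Om i j) (X h) = 0)
    (hbrOO : ∀ h k i j, br (Om h k) (Om i j) = 0)
    (hnXX : ∀ h k, nabla (X h) (X k) = (1 / 2 : ℝ) • Om h k)
    (hnXO : ∀ l h k, nabla (X l) (Om h k) =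
      (1 / 2 : ℝ) • (kron k l • X h - kron h l • X k))
    (hnOX : ∀ l h k, nabla (Om h k) (X l) =
      (1 / 2 : ℝ) • (kron k l • X h - kron h l • X k))
    (hnOO : ∀ h k s t, nabla (Om h k) (Om s t) = 0)
    (R : V → V → V → V)
    (hR : ∀ x y z, R x y z = nabla x (nabla y z) - nabla y (nabla x z) - nabla (br x y) z) :
    (∀ i j h k s t, R (Om i j) (Om h k) (Om s t) = 0) ∧
    (∀ i j h k l, R (Om i j) (Om h k) (X l) =
      (1 / 4 : ℝ) • ((kron l k * kron j h - kron h l * kron j k) • X i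
        + (kron h l * kron i k - kron l k * kron i h) • X j
        + (kron i l * kron j k - kron j l * kron i k) • X h
        + (kron l j * kron i h - kron h j * kron i l) • X k)) := by
  have hks : ∀ a b, kron a b = kron b a := by
    intro a b; simp [hkron, eq_comm]
  constructor
  · intro i j h k s t
    simp [hR, hnOO, hbrOO, map_zero, LinearMap.zero_apply]
  · intro i j h k l
    rw [hR, hbrOO, hnOX, hnOX, map_zero, LinearMap.zero_apply,
      map_smul, map_smul, map_sub, map_sub, map_smul, map_smul, map_smul, map_smul,
      hnOX, hnOX, hnOX, hnOX]
    rw [hks l k, hks l j, hks i l, hks h l, hks k i, hks k j, hks h i]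
    module
end
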